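/- Null structure of the pseudoscalar bilinear form: for all ξ, η ∈ ℝ³ and all θ, θ' ∈ {+1,−1}, Π_θ(ξ) · γ⁰γ⁵ · Π_{θ'}(η) = Π_θ(ξ) · Π_{−θ'}(η) · γ⁰γ⁵. -/
import Mathlib


open Matrix Complex

/-- The Dirac gamma matrices `γ^μ`, `μ = 0,1,2,3`, in the Dirac representation:
`γ⁰ = diag(I₂, −I₂)` and `γʲ = [[0, σʲ], [−σʲ, 0]]` for the Pauli matrices `σʲ`. -/
noncomputable def γ : Fin 4 → Matrix (Fin 4) (Fin 4) ℂ
  | 0 => !![1, 0, 0, 0; 0, 1, 0, 0; 0, 0, -1, 0; 0, 0, 0, -1]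
  | 1 => !![0, 0, 0, 1; 0, 0, 1, 0; 0, -1, 0, 0; -1, 0, 0, 0]
  | 2 => !![0, 0, 0, -I; 0, 0, I, 0; 0, I, 0, 0; -I, 0, 0, 0]
  | 3 => !![0, 0, 1, 0; 0, 0, 0, -1; -1, 0, 0, 0; 0, 1, 0, 0]

/-- The chiral matrix `γ⁵ := i γ⁰ γ¹ γ² γ³`. -/
noncomputable def γ5 : Matrix (Fin 4) (Fin 4) ℂ := I • (γ 0 * γ 1 * γ 2 * γ 3)
/-- The symbol `D(ξ) := ξ₁γ⁰γ¹ + ξ₂γ⁰γ² + ξ₃γ⁰γ³ + γ⁰` of the Dirac operator. -/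
noncomputable def diracSymbol (ξ₁ ξ₂ ξ₃ : ℝ) : Matrix (Fin 4) (Fin 4) ℂ :=
  (ξ₁ : ℂ) • (γ 0 * γ 1) + (ξ₂ : ℂ) • (γ 0 * γ 2) + (ξ₃ : ℂ) • (γ 0 * γ 3) + γ 0
/-- The energy projections
`Π_θ(ξ) := (1/2)(I₄ + θ (ξ₁γ⁰γ¹ + ξ₂γ⁰γ² + ξ₃γ⁰γ³ + γ⁰)/Λ(ξ))`, `Λ(ξ) = √(1+|ξ|²)`. -/
noncomputable def energyProj (θ : ℝ) (ξ₁ ξ₂ ξ₃ : ℝ) : Matrix (Fin 4) (Fin 4) ℂ :=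
  (1 / 2 : ℂ) • ((1 : Matrix (Fin 4) (Fin 4) ℂ) +
    ((θ / Real.sqrt (1 + (ξ₁ ^ 2 + ξ₂ ^ 2 + ξ₃ ^ 2)) : ℝ) : ℂ) • diracSymbol ξ₁ ξ₂ ξ₃)

lemma h01 : γ 0 * γ 1 = !![0,0,0,1; 0,0,1,0; 0,1,0,0; 1,0,0,0] := by
  ext i j
  fin_cases i <;> fin_cases j <;>
    simp [γ, Matrix.mul_apply, Fin.sum_univ_four, Matrix.vecHead, Matrix.vecTail]

lemma h02 : γ 0 * γ 2 = !![0,0,0,-I; 0,0,I,0; 0,-I,0,0; I,0,0,0] := by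
  ext i j
  fin_cases i <;> fin_cases j <;>
    simp [γ, Matrix.mul_apply, Fin.sum_univ_four, Matrix.vecHead, Matrix.vecTail]

lemma h03 : γ 0 * γ 3 = !![0,0,1,0; 0,0,0,-1; 1,0,0,0; 0,-1,0,0] := by
  ext i j
  fin_cases i <;> fin_cases j <;>
    simp [γ, Matrix.mul_apply, Fin.sum_univ_four, Matrix.vecHead, Matrix.vecTail]

lemma h012 : γ 0 * γ 1 * γ 2 = !![-I,0,0,0; 0,I,0,0; 0,0,I,0; 0,0,0,-I] := by
  rw [h01]
  ext i j
  fin_cases i <;> fin_cases j <;>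
    simp [γ, Matrix.mul_apply, Fin.sum_univ_four, Matrix.vecHead, Matrix.vecTail]

lemma h0123 : γ 0 * γ 1 * γ 2 * γ 3 = !![0,0,-I,0; 0,0,0,-I; -I,0,0,0; 0,-I,0,0] := by
  rw [h012]
  ext i j
  fin_cases i <;> fin_cases j <;>
    simp [γ, Matrix.mul_apply, Fin.sum_univ_four, Matrix.vecHead, Matrix.vecTail]

lemma G_eq : γ 0 * γ5 = !![0,0,1,0; 0,0,0,1; -1,0,0,0; 0,-1,0,0] := by
  rw [γ5, h0123, Matrix.mul_smul]
  ext i j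
  fin_cases i <;> fin_cases j <;>
    simp [γ, Matrix.mul_apply, Fin.sum_univ_four, Matrix.vecHead, Matrix.vecTail,
      Complex.I_mul_I]

set_option maxHeartbeats 1600000 in
lemma D_eq (a b c : ℝ) : diracSymbol a b c =
    !![1, 0, (c:ℂ), (a:ℂ) - (b:ℂ)*I;
       0, 1, (a:ℂ) + (b:ℂ)*I, -(c:ℂ);
       (c:ℂ), (a:ℂ) - (b:ℂ)*I, -1, 0;
       (a:ℂ) + (b:ℂ)*I, -(c:ℂ), 0, -1] := by
  rw [diracSymbol, h01, h02, h03]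
  ext i j
  fin_cases i <;> fin_cases j <;>
    simp [γ, Matrix.add_apply, Matrix.smul_apply,
      Matrix.vecHead, Matrix.vecTail] <;> ring

set_option maxHeartbeats 1600000 in
lemma Ganti (a b c : ℝ) :
    (γ 0 * γ5) * diracSymbol a b c = - (diracSymbol a b c * (γ 0 * γ5)) := by
  rw [G_eq, D_eq]
  ext i j
  fin_cases i <;> fin_cases j <;>
    simp [Matrix.mul_apply, Fin.sum_univ_four, Matrix.vecHead, Matrix.vecTail] <;> ring

lemma key (θ' a b c : ℝ) :
    (γ 0 * γ5) * energyProj θ' a b c = energyProj (-θ') a b c * (γ 0 * γ5) := by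
  have hd : ((-θ' / Real.sqrt (1 + (a ^ 2 + b ^ 2 + c ^ 2)) : ℝ) : ℂ)
      = -((θ' / Real.sqrt (1 + (a ^ 2 + b ^ 2 + c ^ 2)) : ℝ) : ℂ) := by
    push_cast [neg_div]; ring
  rw [energyProj, energyProj, hd]
  set d : ℂ := ((θ' / Real.sqrt (1 + (a ^ 2 + b ^ 2 + c ^ 2)) : ℝ) : ℂ)
  have h := Ganti a b c
  set G := γ 0 * γ5
  set D := diracSymbol a b c
  rw [Matrix.mul_smul, Matrix.smul_mul, mul_add, add_mul, mul_one, one_mul,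
    Matrix.mul_smul, Matrix.smul_mul, h]
  rw [smul_neg, ← neg_smul]

theorem pseudoscalar_null_structure (θ θ' : ℝ)
    (hθ : θ = 1 ∨ θ = -1) (hθ' : θ' = 1 ∨ θ' = -1)
    (ξ₁ ξ₂ ξ₃ η₁ η₂ η₃ : ℝ) :
    energyProj θ ξ₁ ξ₂ ξ₃ * (γ 0 * γ5) * energyProj θ' η₁ η₂ η₃ =
      energyProj θ ξ₁ ξ₂ ξ₃ * energyProj (-θ') η₁ η₂ η₃ * (γ 0 * γ5) := by
  rw [mul_assoc, key, mul_assoc]
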